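/- arXiv:2305.02762 — 4 statements merged into one kernel-verified Lean document; each statement's English description precedes it below -/
import Mathlib

section
/- Let k, ℓ, n be integers with 2 ≤ ℓ < k and n ≥ 1000k^8, and let G be a non-bipartite n-vertex {C_3, C_5, …, C_{2ℓ−1}; C_{2k+1}}-free graph whose shortest odd cycle has length 2m+1. Then m ≥ ℓ; moreover, if δ(G) ≥ 2n/(2k+3), then m ≤ k+1 and m ≠ k. -/
/-!
The bounds `ℓ ≤ m` and `m ≠ k` are immediate from the forbidden cycle lengths. For `m ≤ k + 1`,
let `C` be a shortest odd cycle, of length at least `5`. A vertex `v` adjacent to two vertices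
of `C` closes, with each of the two arcs of `C` between them, a closed walk through `v`; as `C`
is odd, one of these walks is odd, and an odd closed walk contains an odd cycle no longer than
itself. Hence the two neighbours are at distance `2` along one of the arcs, and no vertex has
three neighbours on `C`. Double counting the edges between `C` and `V` gives
`|C| δ(G) ≤ 2n`, which together with `δ(G) ≥ 2n / (2k + 3)` forces `|C| ≤ 2k + 3`.
-/

open SimpleGraph

/-- `G` contains a cycle with exactly `a` vertices. -/
def HasNCycle {V : Type*} (G : SimpleGraph V) (a : ℕ) : Prop :=
  ∃ (u : V) (w : G.Walk u u), w.IsCycle ∧ w.length = a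

namespace SimpleGraph.Walk

variable {V : Type*} {G : SimpleGraph V} {u v : V}

lemma exists_walk_getVert_getVert (w : G.Walk u v) {i j : ℕ} (hij : i ≤ j)
    (hj : j ≤ w.length) : ∃ p : G.Walk (w.getVert i) (w.getVert j), p.length = j - i :=
  ⟨((w.drop i).take (j - i)).copy rfl (by rw [drop_getVert, Nat.add_sub_cancel' hij]),
    by simp only [length_copy, take_length, drop_length]; omega⟩

lemma exists_walk_getVert_getVert_around (w : G.Walk u u) {i j : ℕ} (hij : i ≤ j)
    (hj : j ≤ w.length) :
    ∃ p : G.Walk (w.getVert j) (w.getVert i), p.length = w.length - (j - i) :=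
  ⟨(w.drop j).append (w.take i), by simp only [length_append, take_length, drop_length]; omega⟩

theorem exists_hasNCycle_odd_le_length (w : G.Walk u u) (hw : Odd w.length) :
    ∃ a, Odd a ∧ a ≤ w.length ∧ HasNCycle G a := by
  induction hL : w.length using Nat.strong_induction_on generalizing u with
  | _ L ih =>
  subst hL
  by_cases htail : w.tail.IsPath
  · have h3 : 3 ≤ w.length := by
      by_contra! h
      obtain ⟨r, hr⟩ := hw
      exact (adj_of_length_eq_one (p := w) (by omega)).ne rfl
    exact ⟨w.length, hw, le_rfl, u, w, isCycle_iff_isPath_tail_and_le_length.mpr ⟨htail, h3⟩, rfl⟩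
  have htail_length := length_tail_add_one (p := w) fun h ↦ by
    rw [← length_eq_zero_iff] at h
    simp [h] at hw
  obtain ⟨i, j, hi, hij, hj, heq⟩ :
      ∃ i j, 0 < i ∧ i < j ∧ j ≤ w.length ∧ w.getVert i = w.getVert j := by
    obtain ⟨i, hi, j, hj, heq, hne⟩ : ∃ i ≤ w.tail.length, ∃ j ≤ w.tail.length,
        w.tail.getVert i = w.tail.getVert j ∧ i ≠ j := by
      simpa [Set.InjOn, ← IsPath.getVert_injOn_iff] using htail
    rw [getVert_tail, getVert_tail] at heq
    rcases hne.lt_or_gt with h | h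
    · exact ⟨i + 1, j + 1, by omega, by omega, by omega, heq⟩
    · exact ⟨j + 1, i + 1, by omega, by omega, by omega, heq.symm⟩
  -- The repeated vertex `w.getVert i` splits `w` into two shorter closed walks `p` and `q`.
  obtain ⟨p, hp⟩ := w.exists_walk_getVert_getVert hij.le hj
  obtain ⟨q, hq⟩ := w.exists_walk_getVert_getVert_around hij.le hj
  have of_shorter {x : V} (c : G.Walk x x) (hc : Odd c.length) (hlt : c.length < w.length) :
      ∃ a, Odd a ∧ a ≤ w.length ∧ HasNCycle G a :=
    have ⟨a, ha, hale, hcyc⟩ := ih _ hlt c hc rfl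
    ⟨a, ha, hale.trans hlt.le, hcyc⟩
  rcases Nat.even_or_odd (j - i) with hev | hodd
  · refine of_shorter (q.copy heq.symm rfl) ?_ (by rw [length_copy, hq]; omega)
    rw [length_copy, hq]
    exact Nat.Odd.sub_even (by omega) hw hev
  · exact of_shorter (p.copy rfl heq.symm) (by rwa [length_copy, hp])
      (by rw [length_copy, hp]; omega)

lemma le_length_of_odd {L : ℕ} (hshort : ∀ a, Odd a → a < L → ¬ HasNCycle G a)
    (w : G.Walk u u) (hw : Odd w.length) : L ≤ w.length := by
  obtain ⟨a, ha, hale, hcyc⟩ := w.exists_hasNCycle_odd_le_length hw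
  by_contra! hlt
  exact hshort a ha (hale.trans_lt hlt) hcyc

lemma sub_bounds_of_adj_getVert {x : V} (c : G.Walk x x) (hc : Odd c.length)
    (hshort : ∀ a, Odd a → a < c.length → ¬ HasNCycle G a) {i j : ℕ} (hij : i ≤ j)
    (hj : j ≤ c.length) (hvi : G.Adj v (c.getVert i)) (hvj : G.Adj v (c.getVert j)) :
    (Even (j - i) → j - i ≤ 2) ∧ (Odd (j - i) → c.length ≤ j - i + 2) := by
  obtain ⟨p, hp⟩ := c.exists_walk_getVert_getVert hij hj
  obtain ⟨q, hq⟩ := c.exists_walk_getVert_getVert_around hij hj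
  have hp' := le_length_of_odd hshort (cons hvi (p.concat hvj.symm))
  have hq' := le_length_of_odd hshort (cons hvj (q.concat hvi.symm))
  simp only [length_cons, length_concat, hp, hq] at hp' hq'
  rw [Nat.odd_iff] at hc hp' hq'
  refine ⟨fun hev ↦ ?_, fun hodd ↦ hp' ?_⟩
  · rw [Nat.even_iff] at hev
    have := hq' (by omega)
    omega
  · rw [Nat.odd_iff] at hodd
    omega

lemma eq_or_eq_or_eq_of_adj_getVert {x : V} (c : G.Walk x x) (hc : Odd c.length)
    (h5 : 5 ≤ c.length) (hshort : ∀ a, Odd a → a < c.length → ¬ HasNCycle G a) {i j k : ℕ}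
    (hi : i < c.length) (hj : j < c.length) (hk : k < c.length) (hvi : G.Adj v (c.getVert i))
    (hvj : G.Adj v (c.getVert j)) (hvk : G.Adj v (c.getVert k)) : i = j ∨ j = k ∨ i = k := by
  have gap {a b : ℕ} (hab : a ≠ b) (ha : a < c.length) (hb : b < c.length)
      (hva : G.Adj v (c.getVert a)) (hvb : G.Adj v (c.getVert b)) :
      (max a b - min a b) % 2 = 0 ∧ max a b - min a b ≤ 2 ∨
        (max a b - min a b) % 2 = 1 ∧ c.length ≤ max a b - min a b + 2 := by
    wlog hlt : a < b generalizing a b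
    · simpa only [max_comm, min_comm] using this hab.symm hb ha hvb hva (by omega)
    obtain ⟨hev, hodd⟩ := c.sub_bounds_of_adj_getVert hc hshort hlt.le hb.le hva hvb
    rw [max_eq_right hlt.le, min_eq_left hlt.le]
    rcases Nat.even_or_odd (b - a) with h | h
    · exact .inl ⟨Nat.even_iff.mp h, hev h⟩
    · exact .inr ⟨Nat.odd_iff.mp h, hodd h⟩
  rw [Nat.odd_iff] at hc
  by_contra! ⟨hij, hjk, hik⟩
  have := gap hij hi hj hvi hvj
  have := gap hjk hj hk hvj hvk
  have := gap hik hi hk hvi hvk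
  omega

lemma IsCycle.length_mul_minDegree_le [Fintype V] [DecidableRel G.Adj] {x : V} {c : G.Walk x x}
    (hcyc : c.IsCycle) (hc : Odd c.length) (h5 : 5 ≤ c.length)
    (hshort : ∀ a, Odd a → a < c.length → ¬ HasNCycle G a) :
    c.length * G.minDegree ≤ 2 * Fintype.card V := by
  classical
  let S := (Finset.range c.length).image c.getVert
  have hS : S.card = c.length := by
    rw [Finset.card_image_of_injOn, Finset.card_range]
    intro a ha b hb
    simp only [Finset.coe_range, Set.mem_Iio] at ha hb
    exact hcyc.getVert_injOn' (by simp; omega) (by simp; omega)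
  have hdeg (s : V) : G.minDegree ≤ (Finset.univ.bipartiteAbove G.Adj s).card := by
    simpa [Finset.bipartiteAbove, ← neighborFinset_eq_filter] using G.minDegree_le_degree s
  have hnbr (v : V) : (S.bipartiteBelow G.Adj v).card ≤ 2 := by
    by_contra! h
    obtain ⟨_, hx, _, hy, _, hz, hxy, hyz, hxz⟩ := Finset.two_lt_card.mp h
    simp only [Finset.bipartiteBelow, Finset.mem_filter, S, Finset.mem_image,
      Finset.mem_range] at hx hy hz
    obtain ⟨⟨i, hi, rfl⟩, hvi⟩ := hx
    obtain ⟨⟨j, hj, rfl⟩, hvj⟩ := hy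
    obtain ⟨⟨k, hk, rfl⟩, hvk⟩ := hz
    rcases c.eq_or_eq_or_eq_of_adj_getVert hc h5 hshort hi hj hk hvi.symm hvj.symm hvk.symm
      with rfl | rfl | rfl <;> contradiction
  simpa [hS, mul_comm] using
    Finset.card_mul_le_card_mul G.Adj (fun s _ ↦ hdeg s) (fun v _ ↦ hnbr v)

end SimpleGraph.Walk

theorem shortest_odd_cycle_length_bounds_general
    {V : Type*} [Fintype V] (G : SimpleGraph V) [DecidableRel G.Adj]
    (k ℓ m n : ℕ) (hℓk : ℓ < k)
    (hcard : Fintype.card V = n)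
    (hfreeShort : ∀ a : ℕ, Odd a → 3 ≤ a → a < 2 * ℓ + 1 → ¬ HasNCycle G a)
    (hfreeLong : ¬ HasNCycle G (2 * k + 1))
    (hcyc : HasNCycle G (2 * m + 1))
    (hshortest : ∀ a : ℕ, Odd a → a < 2 * m + 1 → ¬ HasNCycle G a) :
    ℓ ≤ m ∧
      (2 * (n : ℝ) / (2 * k + 3) ≤ (G.minDegree : ℝ) → m ≤ k + 1 ∧ m ≠ k) := by
  obtain ⟨u, c, hc, hlen⟩ := hcyc
  have h3 := hc.three_le_length
  refine ⟨?_, fun hδ ↦ ⟨?_, by rintro rfl; exact hfreeLong ⟨u, c, hc, hlen⟩⟩⟩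
  · by_contra! hm
    exact hfreeShort _ (by simp) (by omega) (by omega) ⟨u, c, hc, hlen⟩
  by_contra! hm
  have hcount := hc.length_mul_minDegree_le (by simp [hlen]) (by omega) (hlen ▸ hshortest)
  rw [hlen, hcard] at hcount
  have hn : 0 < n := hcard ▸ Fintype.card_pos_iff.mpr ⟨u⟩
  have hδ' : 2 * n ≤ (2 * k + 3) * G.minDegree := by
    rw [div_le_iff₀ (by positivity)] at hδ
    exact_mod_cast (by linarith : (2 * n : ℝ) ≤ (2 * k + 3) * G.minDegree)
  nlinarith

/-- Claim 2.3, part (i). Let `k, ℓ, n` be integers with `2 ≤ ℓ < k` and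
`n ≥ 1000k⁸`, and let `G` be a non-bipartite `n`-vertex
`{C₃, C₅, …, C_{2ℓ−1}; C_{2k+1}}`-free graph whose shortest odd cycle has length `2m+1`.
Then `m ≥ ℓ`; moreover, if `δ(G) ≥ 2n/(2k+3)`, then `m ≤ k+1` and `m ≠ k`. -/
theorem shortest_odd_cycle_length_bounds
    {V : Type*} [Fintype V] (G : SimpleGraph V) [DecidableRel G.Adj]
    (k ℓ m n : ℕ) (hℓ : 2 ≤ ℓ) (hℓk : ℓ < k) (hn : 1000 * k ^ 8 ≤ n)
    (hcard : Fintype.card V = n)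
    (hfreeShort : ∀ a : ℕ, Odd a → 3 ≤ a → a < 2 * ℓ + 1 → ¬ HasNCycle G a)
    (hfreeLong : ¬ HasNCycle G (2 * k + 1))
    (hnonbip : ¬ G.Colorable 2)
    (hcyc : HasNCycle G (2 * m + 1))
    (hshortest : ∀ a : ℕ, Odd a → a < 2 * m + 1 → ¬ HasNCycle G a) :
    ℓ ≤ m ∧
      (2 * (n : ℝ) / (2 * k + 3) ≤ (G.minDegree : ℝ) → m ≤ k + 1 ∧ m ≠ k) :=
  shortest_odd_cycle_length_bounds_general G k ℓ m n hℓk hcard hfreeShort hfreeLong hcyc hshortest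
end

section
/- Let k, ℓ, n be integers with 2 ≤ ℓ < k, 8ℓ < 2k−1, and n ≥ 1000k^8, and let G be a non-bipartite n-vertex {C_3, C_5, …, C_{2ℓ−1}; C_{2k+1}}-free graph whose shortest odd cycle has length 2m+1. If δ(G) ≥ n/(2(2ℓ+1)), then m ≤ k−1. -/
open SimpleGraph

/-!
Let `C` be a shortest odd cycle, of length `2m + 1 ≥ 5`. A vertex `x` with three neighbours on `C`
cuts `C` into three arcs, one of which has odd length at most `2m - 2`; closing it up through `x`
gives an odd closed walk, hence an odd cycle, shorter than `C`. So every vertex has at most two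
neighbours on `C`, and double counting the edges between `C` and `V` gives
`(2m + 1) δ(G) ≤ 2n`. With `δ(G) ≥ n / (2(2ℓ + 1))` this forces `2m + 1 ≤ 8ℓ + 4 ≤ 2k + 2`,
and `m ≠ k` because `G` has no `C_{2k+1}`.
-/

namespace SimpleGraph.Walk

variable {V : Type*} {G : SimpleGraph V}

lemma length_ne_one_of_closed {u : V} (w : G.Walk u u) : w.length ≠ 1 :=
  fun h ↦ G.irrefl (adj_of_length_eq_one h)

/-- One of the three arcs has odd length at most `L - 3`; closing it up through `x` gives the
shorter odd walk. -/
lemma exists_odd_length_lt_of_arcs {x a b c : V} (hxa : G.Adj x a) (hxb : G.Adj x b)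
    (hxc : G.Adj x c) (p₁ : G.Walk a b) (p₂ : G.Walk b c) (p₃ : G.Walk c a)
    (h₁ : ¬p₁.Nil) (h₂ : ¬p₂.Nil) (h₃ : ¬p₃.Nil) {L : ℕ}
    (hsum : p₁.length + p₂.length + p₃.length = L) (hodd : Odd L) (hL : 5 ≤ L) :
    ∃ W : G.Walk x x, Odd W.length ∧ W.length < L := by
  have hpos₁ := not_nil_iff_lt_length.mp h₁
  have hpos₂ := not_nil_iff_lt_length.mp h₂
  have hpos₃ := not_nil_iff_lt_length.mp h₃
  rw [Nat.odd_iff] at hodd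
  have hcase : (p₁.length % 2 = 1 ∧ p₁.length + 3 ≤ L) ∨
      (p₂.length % 2 = 1 ∧ p₂.length + 3 ≤ L) ∨
      (p₃.length % 2 = 1 ∧ p₃.length + 3 ≤ L) := by omega
  rcases hcase with ⟨ho, hl⟩ | ⟨ho, hl⟩ | ⟨ho, hl⟩
  · exact ⟨cons hxa (p₁.concat hxb.symm), by simp [Nat.odd_iff]; omega, by simp; omega⟩
  · exact ⟨cons hxb (p₂.concat hxc.symm), by simp [Nat.odd_iff]; omega, by simp; omega⟩
  · exact ⟨cons hxc (p₃.concat hxa.symm), by simp [Nat.odd_iff]; omega, by simp; omega⟩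

variable [DecidableEq V]

lemma exists_eq_append_of_two_le_count {x : V} (w : G.Walk x x)
    (h : 2 ≤ w.support.tail.count x) :
    ∃ c₁ c₂ : G.Walk x x, w = c₁.append c₂ ∧ ¬c₁.Nil ∧ ¬c₂.Nil := by
  cases w with
  | nil => simp at h
  | cons hadj p =>
    rw [support_cons, List.tail_cons] at h
    have hx : x ∈ p.support := List.count_pos_iff.mp (by omega)
    refine ⟨cons hadj (p.takeUntil x hx), p.dropUntil x hx, ?_, not_nil_cons, fun hnil ↦ ?_⟩
    · rw [cons_append, p.take_spec hx]
    · have hp := p.take_spec hx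
      rw [hnil.eq_nil, append_nil] at hp
      have := p.count_support_takeUntil_eq_one hx
      rw [hp] at this
      omega

lemma exists_isCycle_odd_length_le {u : V} (w : G.Walk u u) (hw : Odd w.length) :
    ∃ (v : V) (c : G.Walk v v), c.IsCycle ∧ Odd c.length ∧ c.length ≤ w.length := by
  induction hL : w.length using Nat.strong_induction_on generalizing u with
  | _ L ih =>
    subst hL
    by_cases hnd : w.support.tail.Nodup
    · have hnil : ¬w.Nil := fun h ↦ by simp [h.eq_nil] at hw
      refine ⟨u, w, isCycle_iff_isPath_tail_and_le_length.mpr ⟨?_, ?_⟩, hw, le_rfl⟩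
      · rwa [isPath_def, support_tail_of_not_nil w hnil]
      · have := w.length_ne_one_of_closed
        obtain ⟨j, hj⟩ := hw
        omega
    · obtain ⟨y, hdup⟩ := List.exists_duplicate_iff_not_nodup.mpr hnd
      have hy : y ∈ w.support := List.mem_of_mem_tail hdup.mem
      have hcount : 2 ≤ (w.rotate y hy).support.tail.count y := by
        rw [(w.support_rotate y hy).perm.count_eq]
        exact List.duplicate_iff_two_le_count.mp hdup
      obtain ⟨c₁, c₂, hsplit, hc₁, hc₂⟩ :=
        (w.rotate y hy).exists_eq_append_of_two_le_count hcount
      have hlen : c₁.length + c₂.length = w.length := by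
        rw [← length_append, ← hsplit, length_rotate]
      have h₁ := not_nil_iff_lt_length.mp hc₁
      have h₂ := not_nil_iff_lt_length.mp hc₂
      rcases Nat.even_or_odd c₁.length with heven | hodd
      · obtain ⟨v, c, hc, hco, hcl⟩ := ih c₂.length (by omega) c₂
          (by rw [← hlen] at hw; exact (Nat.odd_add'.mp hw).mpr heven) rfl
        exact ⟨v, c, hc, hco, by omega⟩
      · obtain ⟨v, c, hc, hco, hcl⟩ := ih c₁.length (by omega) c₁ hodd rfl
        exact ⟨v, c, hc, hco, by omega⟩

lemma exists_odd_length_lt_of_three_adj {x a b c : V} (w : G.Walk a a)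
    (hb : b ∈ w.support) (hc : c ∈ w.support) (hab : a ≠ b) (hac : a ≠ c) (hbc : b ≠ c)
    (hxa : G.Adj x a) (hxb : G.Adj x b) (hxc : G.Adj x c)
    (hodd : Odd w.length) (hL : 5 ≤ w.length) :
    ∃ W : G.Walk x x, Odd W.length ∧ W.length < w.length := by
  have hw := congrArg length (w.take_spec hb)
  rw [length_append] at hw
  by_cases hcb : c ∈ (w.takeUntil b hb).support
  · have hq := congrArg length ((w.takeUntil b hb).take_spec hcb)
    rw [length_append] at hq
    exact exists_odd_length_lt_of_arcs hxa hxc hxb ((w.takeUntil b hb).takeUntil c hcb)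
      ((w.takeUntil b hb).dropUntil c hcb) (w.dropUntil b hb)
      (not_nil_of_ne hac) (not_nil_of_ne hbc.symm) (not_nil_of_ne hab.symm) (by omega) hodd hL
  · have hcb' : c ∈ (w.dropUntil b hb).support := by
      have hc' := (w.take_spec hb).symm ▸ hc
      rw [mem_support_append_iff] at hc'
      exact hc'.resolve_left hcb
    have hq := congrArg length ((w.dropUntil b hb).take_spec hcb')
    rw [length_append] at hq
    exact exists_odd_length_lt_of_arcs hxa hxb hxc (w.takeUntil b hb)
      ((w.dropUntil b hb).takeUntil c hcb') ((w.dropUntil b hb).dropUntil c hcb')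
      (not_nil_of_ne hab) (not_nil_of_ne hbc) (not_nil_of_ne hac.symm) (by omega) hodd hL

end SimpleGraph.Walk

namespace SimpleGraph

open Finset

variable {V : Type*} {G : SimpleGraph V}

lemma card_filter_adj_le_two_of_forall_odd_le [DecidableRel G.Adj] {u : V} (w : G.Walk u u)
    (hodd : Odd w.length) (hL : 5 ≤ w.length)
    (hmin : ∀ (v : V) (W : G.Walk v v), Odd W.length → w.length ≤ W.length)
    (s : Finset V) (hs : ∀ v ∈ s, v ∈ w.support) (x : V) :
    #{v ∈ s | G.Adj v x} ≤ 2 := by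
  classical
  by_contra! hgt
  obtain ⟨a, ha, b, hb, c, hc, hab, hac, hbc⟩ := two_lt_card.mp hgt
  simp only [mem_filter] at ha hb hc
  have ha' := hs a ha.1
  obtain ⟨W, hWodd, hWlt⟩ := (w.rotate a ha').exists_odd_length_lt_of_three_adj
    ((w.mem_support_rotate_iff a ha').mpr (hs b hb.1))
    ((w.mem_support_rotate_iff a ha').mpr (hs c hc.1)) hab hac hbc
    ha.2.symm hb.2.symm hc.2.symm (by simpa using hodd) (by simpa using hL)
  have := hmin x W hWodd
  rw [Walk.length_rotate] at hWlt
  omega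

lemma card_mul_minDegree_le_of_forall_card_filter_adj_le [Fintype V] [DecidableRel G.Adj]
    (s : Finset V) {d : ℕ} (h : ∀ x, #{v ∈ s | G.Adj v x} ≤ d) :
    #s * G.minDegree ≤ Fintype.card V * d := by
  classical
  refine card_nsmul_le_card_nsmul G.Adj (fun a _ ↦ ?_) (fun b _ ↦ h b)
  rw [bipartiteAbove, ← neighborFinset_eq_filter, card_neighborFinset_eq_degree]
  exact G.minDegree_le_degree a

theorem Walk.IsCycle.length_mul_minDegree_le_s10 [Fintype V] [DecidableRel G.Adj] {u : V}
    {c : G.Walk u u} (hc : c.IsCycle) (hodd : Odd c.length) (hL : 5 ≤ c.length)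
    (hmin : ∀ (v : V) (W : G.Walk v v), Odd W.length → c.length ≤ W.length) :
    c.length * G.minDegree ≤ 2 * Fintype.card V := by
  classical
  have hcard : #c.support.tail.toFinset = c.length := by
    rw [List.toFinset_card_of_nodup hc.support_nodup, List.length_tail, Walk.length_support]
    rfl
  have := card_mul_minDegree_le_of_forall_card_filter_adj_le c.support.tail.toFinset
    (card_filter_adj_le_two_of_forall_odd_le c hodd hL hmin _
      fun v hv ↦ List.mem_of_mem_tail (List.mem_toFinset.mp hv))
  rw [hcard] at this
  linarith

end SimpleGraph

theorem shortest_odd_cycle_length_upper_bound_general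
    {V : Type*} [Fintype V] (G : SimpleGraph V) [DecidableRel G.Adj]
    (k ℓ m n : ℕ) (hrange : 8 * ℓ + 1 < 2 * k)
    (hcard : Fintype.card V = n)
    (hfreeLong : ¬ HasNCycle G (2 * k + 1))
    (hcyc : HasNCycle G (2 * m + 1))
    (hshortest : ∀ a : ℕ, Odd a → a < 2 * m + 1 → ¬ HasNCycle G a)
    (hdeg : (n : ℝ) / (2 * (2 * ℓ + 1)) ≤ (G.minDegree : ℝ)) :
    m ≤ k - 1 := by
  classical
  have hmk : m ≠ k := by rintro rfl; exact hfreeLong hcyc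
  obtain ⟨u, c, hc, hlen⟩ := hcyc
  have hmin : ∀ (v : V) (W : G.Walk v v), Odd W.length → c.length ≤ W.length := by
    intro v W hW
    obtain ⟨_, c', hc', hodd', hle⟩ := W.exists_isCycle_odd_length_le hW
    by_contra! hlt
    exact hshortest _ hodd' (by omega) ⟨_, c', hc', rfl⟩
  rcases Nat.lt_or_ge m 2 with hm | hm
  · omega
  have hcount := hc.length_mul_minDegree_le_s10 (hlen ▸ odd_two_mul_add_one m) (by omega) hmin
  rw [hlen, hcard] at hcount
  have hn : (0 : ℝ) < n := by
    rw [← hcard]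
    exact_mod_cast Fintype.card_pos_iff.mpr ⟨u⟩
  have hbound : ((2 * m + 1 : ℕ) : ℝ) * (n / (2 * (2 * ℓ + 1))) ≤ 2 * n :=
    calc ((2 * m + 1 : ℕ) : ℝ) * (n / (2 * (2 * ℓ + 1)))
        ≤ ((2 * m + 1 : ℕ) : ℝ) * G.minDegree := by gcongr
      _ ≤ 2 * n := by exact_mod_cast hcount
  rw [mul_div_assoc', div_le_iff₀ (by positivity)] at hbound
  have : 2 * m + 1 ≤ 4 * (2 * ℓ + 1) := by
    have : ((2 * m + 1 : ℕ) : ℝ) ≤ 4 * (2 * ℓ + 1) := by nlinarith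
    exact_mod_cast this
  omega

/-- Claim 2.3, part (ii). Let `k, ℓ, n` be integers with `2 ≤ ℓ < k`,
`8ℓ < 2k - 1`, and `n ≥ 1000k⁸`, and let `G` be a non-bipartite `n`-vertex
`{C₃, C₅, …, C_{2ℓ−1}; C_{2k+1}}`-free graph whose shortest odd cycle has length `2m+1`.
If `δ(G) ≥ n/(2(2ℓ+1))`, then `m ≤ k - 1`. -/
theorem shortest_odd_cycle_length_upper_bound
    {V : Type*} [Fintype V] (G : SimpleGraph V) [DecidableRel G.Adj]
    (k ℓ m n : ℕ) (hℓ : 2 ≤ ℓ) (hℓk : ℓ < k) (hrange : 8 * ℓ + 1 < 2 * k)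
    (hn : 1000 * k ^ 8 ≤ n) (hcard : Fintype.card V = n)
    (hfreeShort : ∀ a : ℕ, Odd a → 3 ≤ a → a < 2 * ℓ + 1 → ¬ HasNCycle G a)
    (hfreeLong : ¬ HasNCycle G (2 * k + 1))
    (hnonbip : ¬ G.Colorable 2)
    (hcyc : HasNCycle G (2 * m + 1))
    (hshortest : ∀ a : ℕ, Odd a → a < 2 * m + 1 → ¬ HasNCycle G a)
    (hdeg : (n : ℝ) / (2 * (2 * ℓ + 1)) ≤ (G.minDegree : ℝ)) :
    m ≤ k - 1 :=
  shortest_odd_cycle_length_upper_bound_general G k ℓ m n hrange hcard hfreeLong hcyc hshortest hdeg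
end

section
/- Let 2 ≤ ℓ < k be integers, let G be a {C_3, C_5, …, C_{2ℓ−1}; C_{2k+1}}-free graph with shortest odd cycle C_{2m+1} = v_1v_2⋯v_{2m+1}v_1, and define G' and the sets S_i as in the setup. Then for every i ∈ {1,…,2m+1}, the graph G' contains no path with 2k vertices both of whose ends lie in S_i. -/
/-! A path with `2k` vertices avoiding `vᵢ` whose ends are both neighbours of `vᵢ` closes up
through `vᵢ` into a cycle with `2k + 1` vertices. -/

open SimpleGraph

namespace SimpleGraph.Walk

variable {V : Type*} {G : SimpleGraph V}

theorem IsPath.isCycle_cons_concat {u x y : V} {p : G.Walk x y} (hp : p.IsPath)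
    (hu : u ∉ p.support) (hxy : x ≠ y) (hux : G.Adj u x) (hyu : G.Adj y u) :
    (cons hux (p.concat hyu)).IsCycle := by
  have hlen : 1 ≤ p.length := Nat.one_le_iff_ne_zero.mpr fun h => hxy (p.eq_of_length_eq_zero h)
  refine isCycle_iff_isPath_tail_and_le_length.mpr ⟨?_, ?_⟩
  · simpa using hp.concat hu hyu
  · simp only [length_cons, length_concat]
    omega

end SimpleGraph.Walk

theorem hasNCycle_of_isPath_between_neighbors {V : Type*} {G : SimpleGraph V} {u x y : V}
    {p : G.Walk x y} (hp : p.IsPath) (hu : u ∉ p.support) (hxy : x ≠ y) (hux : G.Adj u x)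
    (huy : G.Adj u y) : HasNCycle G (p.length + 2) :=
  ⟨u, .cons hux (p.concat huy.symm), hp.isCycle_cons_concat hu hxy hux huy.symm, by simp⟩

theorem no_long_path_both_ends_in_Si_general
    {V : Type*} (G : SimpleGraph V)
    (k m : ℕ)
    (hfreeLong : ¬ HasNCycle G (2 * k + 1))
    (v : Fin (2 * m + 1) → V)
    (S : Fin (2 * m + 1) → Set V)
    (hS : ∀ i, S i = {x | x ∉ Set.range v ∧ G.Adj (v i) x}) :
    ∀ i : Fin (2 * m + 1),
      ¬ ∃ (x y : V) (p : G.Walk x y), p.IsPath ∧ p.length + 1 = 2 * k ∧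
          x ∈ S i ∧ y ∈ S i ∧ ∀ z ∈ p.support, z ∉ Set.range v := by
  rintro i ⟨x, y, p, hp, hlen, hx, hy, hoff⟩
  rw [hS] at hx hy
  have hvi : v i ∉ p.support := fun h => hoff _ h ⟨i, rfl⟩
  have hxy : x ≠ y := by
    rintro rfl
    have := (Walk.isPath_iff_nil.mp hp).length_eq_zero
    omega
  have hcycle := hasNCycle_of_isPath_between_neighbors hp hvi hxy hx.2 hy.2
  exact hfreeLong (by rwa [show p.length + 2 = 2 * k + 1 by omega] at hcycle)

/-- Claim 2.4(i). Let `2 ≤ ℓ < k`, let `G` be a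
`{C₃, C₅, …, C_{2ℓ−1}; C_{2k+1}}`-free graph with shortest odd cycle
`C_{2m+1} = v₁v₂⋯v_{2m+1}v₁`, and let `Sᵢ` be the neighbors of `vᵢ` in
`G' = G − V(C_{2m+1})`. Then for every `i`, the graph `G'` contains no path with `2k`
vertices both of whose ends lie in `Sᵢ`. -/
theorem no_long_path_both_ends_in_Si
    {V : Type*} (G : SimpleGraph V)
    (k ℓ m : ℕ) (hℓ : 2 ≤ ℓ) (hℓk : ℓ < k)
    (hfreeShort : ∀ a : ℕ, Odd a → 3 ≤ a → a < 2 * ℓ + 1 → ¬ HasNCycle G a)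
    (hfreeLong : ¬ HasNCycle G (2 * k + 1))
    (v : Fin (2 * m + 1) → V) (hinj : Function.Injective v)
    (hadj : ∀ i : Fin (2 * m + 1), G.Adj (v i) (v (i + 1)))
    (hshortest : ∀ a : ℕ, Odd a → a < 2 * m + 1 → ¬ HasNCycle G a)
    (S : Fin (2 * m + 1) → Set V)
    (hS : ∀ i, S i = {x | x ∉ Set.range v ∧ G.Adj (v i) x}) :
    ∀ i : Fin (2 * m + 1),
      ¬ ∃ (x y : V) (p : G.Walk x y), p.IsPath ∧ p.length + 1 = 2 * k ∧
          x ∈ S i ∧ y ∈ S i ∧ ∀ z ∈ p.support, z ∉ Set.range v :=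
  no_long_path_both_ends_in_Si_general G k m hfreeLong v S hS
end

section
/- Let 2 ≤ ℓ < k be integers, let G be a {C_3, C_5, …, C_{2ℓ−1}; C_{2k+1}}-free graph with shortest odd cycle C_{2m+1} = v_1v_2⋯v_{2m+1}v_1, and define G', the sets S_i, and the subpaths P_{ij}^{odd} with orders p_{ij}^{odd} as in the setup. Then for all i ≠ j in {1,…,2m+1}, the graph G' contains no path with 2k+1−p_{ij}^{odd} vertices having one end in S_i and the other end in S_j. -/
open SimpleGraph

/-- The number of vertices of the subpath of the cycle `v_1 v_2 ⋯ v_c v_1` joining `v_i`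
to `v_j` that has an odd number of vertices (the order `p_{ij}^{odd}` of `P_{ij}^{odd}`). -/
def pOdd {c : ℕ} (i j : Fin c) : ℕ :=
  if Odd ((j - i).val + 1) then (j - i).val + 1 else (i - j).val + 1

/-- The number of vertices of the subpath of the cycle `v_1 v_2 ⋯ v_c v_1` joining `v_i`
to `v_j` that has an even number of vertices (the order `p_{ij}^{even}` of `P_{ij}^{even}`). -/
def pEven {c : ℕ} (i j : Fin c) : ℕ :=
  if Even ((j - i).val + 1) then (j - i).val + 1 else (i - j).val + 1

/-!
Joining the two ends of the path `x ⋯ y` in `G'` to `vᵢ` and `vⱼ` and closing it up along the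
arc `P_{ij}^{odd}` of the shortest odd cycle gives a cycle: the path avoids the cycle, and the arc
is a path because the `vᵢ` are distinct. Its order is `(2k + 1 − p_{ij}^{odd}) + p_{ij}^{odd}`,
so `G` would contain a `C_{2k+1}`.
-/

namespace SimpleGraph

variable {V : Type*} {G : SimpleGraph V}

theorem hasNCycle_of_adj_of_disjoint_isPath {a b x y : V} {q : G.Walk a b} {p : G.Walk x y}
    (hq : q.IsPath) (hp : p.IsPath) (hab : a ≠ b) (hax : G.Adj a x) (hby : G.Adj b y)
    (hdisj : p.support.Disjoint q.support) :
    HasNCycle G (p.length + q.length + 2) := by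
  have ha : a ∉ p.support := fun h ↦ hdisj h q.start_mem_support
  have hy : y ∉ q.support := hdisj p.end_mem_support
  have hq0 : q.length ≠ 0 := fun h ↦ hab (q.eq_of_length_eq_zero h)
  refine ⟨a, (Walk.cons hax p).append (Walk.cons hby.symm q.reverse), ?_, ?_⟩
  · refine (hp.cons ha).isCycle_append (hq.reverse.cons (by simpa using hy)) (by simpa using hdisj) ?_
    simp only [Walk.length_cons, Walk.length_reverse]
    omega
  · simp only [Walk.length_append, Walk.length_cons, Walk.length_reverse]
    omega

section CycleArc

open Fin.NatCast Fin.CommRing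

variable {c : ℕ} [NeZero c] {v : Fin c → V}

theorem exists_isPath_along (hinj : Function.Injective v) (hadj : ∀ i, G.Adj (v i) (v (i + 1))) :
    ∀ t : ℕ, t < c → ∀ i : Fin c, ∃ q : G.Walk (v i) (v (i + t)),
      q.IsPath ∧ q.length = t ∧ ∀ z ∈ q.support, ∃ s ≤ t, z = v (i + s)
  | 0, _, i => ⟨Walk.nil.copy rfl (by simp), by simp, by simp, by simp⟩
  | t + 1, ht, i => by
    obtain ⟨q, hq, hlen, hsupp⟩ := exists_isPath_along hinj hadj t (by omega) (i + 1)
    have hi : v i ∉ q.support := by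
      intro hmem
      obtain ⟨s, hs, hvs⟩ := hsupp _ hmem
      have h0 : ((s + 1 : ℕ) : Fin c) = 0 := by
        have := hinj hvs
        push_cast
        linear_combination -this
      rw [Fin.natCast_eq_zero] at h0
      exact absurd (Nat.le_of_dvd (by omega) h0) (by omega)
    refine ⟨(Walk.cons (hadj i) q).copy rfl (by push_cast; ring_nf), ?_, by simp [hlen], ?_⟩
    · simpa using ⟨hq, hi⟩
    · simp only [Walk.support_copy, Walk.support_cons, List.mem_cons]
      rintro z (rfl | hz)
      · exact ⟨0, by omega, by simp⟩
      · obtain ⟨s, hs, rfl⟩ := hsupp z hz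
        exact ⟨s + 1, by omega, by push_cast; ring_nf⟩

theorem exists_isPath_arc (hinj : Function.Injective v) (hadj : ∀ i, G.Adj (v i) (v (i + 1)))
    (i j : Fin c) : ∃ q : G.Walk (v i) (v j),
      q.IsPath ∧ q.length = (j - i).val ∧ ∀ z ∈ q.support, z ∈ Set.range v := by
  obtain ⟨q, hq, hlen, hsupp⟩ := exists_isPath_along hinj hadj (j - i).val (j - i).isLt i
  have hj : i + (((j - i).val : ℕ) : Fin c) = j := by rw [Fin.cast_val_eq_self]; ring
  refine ⟨q.copy rfl (by rw [hj]), by simpa using hq, by simpa using hlen, ?_⟩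
  intro z hz
  obtain ⟨s, -, rfl⟩ := hsupp z (by simpa using hz)
  exact Set.mem_range_self _

theorem hasNCycle_of_isPath_off_cycle (hinj : Function.Injective v)
    (hadj : ∀ i, G.Adj (v i) (v (i + 1))) {i j : Fin c} (hij : i ≠ j) {x y : V}
    (hx : G.Adj (v i) x) (hy : G.Adj (v j) y) {p : G.Walk x y} (hp : p.IsPath)
    (hoff : ∀ z ∈ p.support, z ∉ Set.range v) :
    HasNCycle G (p.length + (j - i).val + 2) := by
  obtain ⟨q, hq, hlen, hsupp⟩ := exists_isPath_arc hinj hadj i j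
  rw [← hlen]
  exact hasNCycle_of_adj_of_disjoint_isPath hq hp (hinj.ne hij) hx hy
    fun z hzp hzq ↦ hoff z hzp (hsupp z hzq)

end CycleArc

end SimpleGraph

theorem no_long_path_ends_in_Si_Sj_general
    {V : Type*} (G : SimpleGraph V)
    (k m : ℕ)
    (hfreeLong : ¬ HasNCycle G (2 * k + 1))
    (v : Fin (2 * m + 1) → V) (hinj : Function.Injective v)
    (hadj : ∀ i : Fin (2 * m + 1), G.Adj (v i) (v (i + 1)))
    (S : Fin (2 * m + 1) → Set V)
    (hS : ∀ i, S i = {x | x ∉ Set.range v ∧ G.Adj (v i) x}) :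
    ∀ i j : Fin (2 * m + 1), i ≠ j →
      ¬ ∃ (x y : V) (p : G.Walk x y), p.IsPath ∧ p.length + 1 = 2 * k + 1 - pOdd i j ∧
          x ∈ S i ∧ y ∈ S j ∧ ∀ z ∈ p.support, z ∉ Set.range v := by
  rintro i j hij ⟨x, y, p, hp, hlen, hx, hy, hoff⟩
  rw [hS] at hx hy
  apply hfreeLong
  unfold pOdd at hlen
  split_ifs at hlen
  · have hcyc := hasNCycle_of_isPath_off_cycle hinj hadj hij hx.2 hy.2 hp hoff
    rwa [show p.length + (j - i).val + 2 = 2 * k + 1 by omega] at hcyc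
  · have hcyc := hasNCycle_of_isPath_off_cycle hinj hadj hij.symm hy.2 hx.2 hp.reverse
      (by simpa using hoff)
    rwa [Walk.length_reverse, show p.length + (i - j).val + 2 = 2 * k + 1 by omega] at hcyc

/-- Claim 2.4(ii). Let `2 ≤ ℓ < k`, let `G` be a
`{C₃, C₅, …, C_{2ℓ−1}; C_{2k+1}}`-free graph with shortest odd cycle
`C_{2m+1} = v₁v₂⋯v_{2m+1}v₁`, and let `Sᵢ` be the neighbors of `vᵢ` in
`G' = G − V(C_{2m+1})`. Then for all `i ≠ j`, the graph `G'` contains no path with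
`2k + 1 − p_{ij}^{odd}` vertices having one end in `Sᵢ` and the other end in `Sⱼ`. -/
theorem no_long_path_ends_in_Si_Sj
    {V : Type*} (G : SimpleGraph V)
    (k ℓ m : ℕ) (hℓ : 2 ≤ ℓ) (hℓk : ℓ < k)
    (hfreeShort : ∀ a : ℕ, Odd a → 3 ≤ a → a < 2 * ℓ + 1 → ¬ HasNCycle G a)
    (hfreeLong : ¬ HasNCycle G (2 * k + 1))
    (v : Fin (2 * m + 1) → V) (hinj : Function.Injective v)
    (hadj : ∀ i : Fin (2 * m + 1), G.Adj (v i) (v (i + 1)))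
    (hshortest : ∀ a : ℕ, Odd a → a < 2 * m + 1 → ¬ HasNCycle G a)
    (S : Fin (2 * m + 1) → Set V)
    (hS : ∀ i, S i = {x | x ∉ Set.range v ∧ G.Adj (v i) x}) :
    ∀ i j : Fin (2 * m + 1), i ≠ j →
      ¬ ∃ (x y : V) (p : G.Walk x y), p.IsPath ∧ p.length + 1 = 2 * k + 1 - pOdd i j ∧
          x ∈ S i ∧ y ∈ S j ∧ ∀ z ∈ p.support, z ∉ Set.range v :=
  no_long_path_ends_in_Si_Sj_general G k m hfreeLong v hinj hadj S hS
end
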